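/- arXiv:2107.07356 — 2 statements merged into one kernel-verified Lean document; each statement's English description precedes it below -/
import Mathlib

section
/- Conversely to the pairwise feasibility test: if |D_i ∩ D_j| ≥ S_i + S_j − k, S_i ≤ |D_i|, S_j ≤ |D_j|, and S_i + S_j − |D_i ∩ D_j| ≤ k (with S_i, S_j ≤ k), then there exists a committee W ⊆ D_i ∪ D_j of size at most k with |W ∩ D_i| ≥ S_i and |W ∩ D_j| ≥ S_j. -/
/-- Converse of the pairwise feasibility test: if
|D_i ∩ D_j| ≥ S_i + S_j − k, S_i ≤ |D_i|, S_j ≤ |D_j|, S_i, S_j ≤ k, then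
some committee W ⊆ D_i ∪ D_j of size ≤ k satisfies both constraints. -/
theorem stmt_4 {C : Type*} [DecidableEq C]
    (Di Dj : Finset C) (Si Sj k : ℕ) (hk : 0 < k)
    (hSi : Si ≤ Di.card) (hSj : Sj ≤ Dj.card)
    (hSik : Si ≤ k) (hSjk : Sj ≤ k)
    (h : Si + Sj ≤ k + (Di ∩ Dj).card) :
    ∃ W : Finset C, W ⊆ Di ∪ Dj ∧ W.card ≤ k ∧
      Si ≤ (W ∩ Di).card ∧ Sj ≤ (W ∩ Dj).card := by
  set t := (Di ∩ Dj).card with ht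
  set o := min t Si with ho
  obtain ⟨A, hA, hAcard⟩ := Finset.exists_subset_card_eq
    (show o ≤ (Di ∩ Dj).card from min_le_left _ _)
  have hADi : A ⊆ Di := hA.trans Finset.inter_subset_left
  have hADj : A ⊆ Dj := hA.trans Finset.inter_subset_right
  have hBex : Si - o ≤ (Di \ A).card := by
    rw [Finset.card_sdiff_of_subset hADi, hAcard]; omega
  obtain ⟨B, hB, hBcard⟩ := Finset.exists_subset_card_eq hBex
  have hCex : Sj - o ≤ (Dj \ A).card := by
    rw [Finset.card_sdiff_of_subset hADj, hAcard]; omega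
  obtain ⟨Cc, hC, hCcard⟩ := Finset.exists_subset_card_eq hCex
  have hBDi : B ⊆ Di := hB.trans (Finset.sdiff_subset)
  have hCDj : Cc ⊆ Dj := hC.trans (Finset.sdiff_subset)
  have hAB : Disjoint A B := by
    refine Finset.disjoint_left.2 fun x hxA hxB => ?_
    exact (Finset.mem_sdiff.1 (hB hxB)).2 hxA
  have hAC : Disjoint A Cc := by
    refine Finset.disjoint_left.2 fun x hxA hxC => ?_
    exact (Finset.mem_sdiff.1 (hC hxC)).2 hxA
  have hBDj : Disjoint B Dj := by
    rcases le_or_gt t Si with hts | hst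
    · have hot : o = t := by omega
      have hAeq : A = Di ∩ Dj := Finset.eq_of_subset_of_card_le hA (by omega)
      refine Finset.disjoint_left.2 fun x hx hxDj => ?_
      have hx' := hB hx
      rw [hAeq] at hx'
      simp only [Finset.mem_sdiff, Finset.mem_inter] at hx'
      exact hx'.2 ⟨hx'.1, hxDj⟩
    · have hBe : B = ∅ := Finset.card_eq_zero.1 (by omega)
      simp [hBe]
  refine ⟨A ∪ B ∪ Cc, ?_, ?_, ?_, ?_⟩
  · intro x hx
    simp only [Finset.mem_union] at hx ⊢
    rcases hx with (hx | hx) | hx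
    · exact Or.inl (hADi hx)
    · exact Or.inl (hBDi hx)
    · exact Or.inr (hCDj hx)
  · calc (A ∪ B ∪ Cc).card ≤ (A ∪ B).card + Cc.card := Finset.card_union_le _ _
      _ ≤ A.card + B.card + Cc.card := by
          exact Nat.add_le_add_right (Finset.card_union_le _ _) _
      _ ≤ k := by omega
  · have hsub : A ∪ B ⊆ (A ∪ B ∪ Cc) ∩ Di := by
      intro x hx
      rcases Finset.mem_union.1 hx with hx' | hx'
      · exact Finset.mem_inter.2 ⟨Finset.mem_union_left _ (Finset.mem_union_left _ hx'), hADi hx'⟩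
      · exact Finset.mem_inter.2 ⟨Finset.mem_union_left _ (Finset.mem_union_right _ hx'), hBDi hx'⟩
    have := Finset.card_le_card hsub
    rw [Finset.card_union_of_disjoint hAB] at this
    omega
  · have hsub : A ∪ Cc ⊆ (A ∪ B ∪ Cc) ∩ Dj := by
      intro x hx
      rcases Finset.mem_union.1 hx with hx' | hx'
      · exact Finset.mem_inter.2 ⟨Finset.mem_union_left _ (Finset.mem_union_left _ hx'), hADj hx'⟩
      · exact Finset.mem_inter.2 ⟨Finset.mem_union_right _ hx', hCDj hx'⟩
    have := Finset.card_le_card hsub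
    rw [Finset.card_union_of_disjoint hAC] at this
    omega
end

section
/- Let H = (X, E) be a graph. Construct an election with one candidate per vertex and one voter per edge, where the voter for edge e = {x_i, x_j} ranks c_i and c_j (ordered by index) in the top two positions and the remaining m − 2 candidates below. Use the Chamberlin–Courant rule with a positional scoring vector s satisfying s₁ = s₂ and s₂ > s_i for all i ≥ 3. Then H has a vertex cover of size at most k if and only if there exists a committee W of size at most k whose CC score equals |E|·s₁ (the maximum possible), i.e., every voter has one of her top-2 candidates in W. -/
/-!
A voter's CC utility is `s₁` exactly when her best-ranked committee member sits in one of the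
top two positions, i.e. is an endpoint of her edge, because `s₁ = s₂` and every later entry of
`s` is strictly smaller. Since no utility exceeds `s₁`, the score `|E| · s₁` is reached exactly
when every voter attains `s₁`, i.e. when the committee is a vertex cover. The committee must be
nonempty for the score to be defined, so an empty cover (possible only when `E = ∅`) is
enlarged to a singleton.
-/

open Finset

theorem exists_nonempty_superset_card_le {α : Type*} [Nonempty α] {S : Finset α} {k : ℕ}
    (hk : 1 ≤ k) (hS : S.card ≤ k) :
    ∃ W : Finset α, W.Nonempty ∧ S ⊆ W ∧ W.card ≤ k := by
  obtain rfl | hne := S.eq_empty_or_nonempty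
  · obtain ⟨x⟩ := ‹Nonempty α›
    exact ⟨{x}, singleton_nonempty x, empty_subset _, by simpa using hk⟩
  · exact ⟨S, hne, Subset.rfl, hS⟩

section Scores

variable {m : ℕ} (hm : 2 ≤ m) {s : Fin m → ℝ}
include hm

theorem score_eq_top_iff (hs12 : s ⟨0, by omega⟩ = s ⟨1, by omega⟩)
    (hstrict : ∀ i : Fin m, 2 ≤ (i : ℕ) → s i < s ⟨1, by omega⟩) (i : Fin m) :
    s i = s ⟨0, by omega⟩ ↔ (i : ℕ) < 2 := by
  refine ⟨fun h => ?_, fun h => ?_⟩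
  · by_contra hi
    exact (hstrict i (by omega)).ne (h.trans hs12)
  · obtain hi | hi : (i : ℕ) = 0 ∨ (i : ℕ) = 1 := by omega
    · rw [show i = ⟨0, by omega⟩ from Fin.ext hi]
    · rw [show i = ⟨1, by omega⟩ from Fin.ext hi, hs12]

theorem score_le_top (hmono : Antitone s) (i : Fin m) : s i ≤ s ⟨0, by omega⟩ :=
  hmono (Nat.zero_le i)

theorem utility_eq_top_iff_inter_nonempty {X : Type*} [DecidableEq X]
    (hs12 : s ⟨0, by omega⟩ = s ⟨1, by omega⟩)
    (hstrict : ∀ i : Fin m, 2 ≤ (i : ℕ) → s i < s ⟨1, by omega⟩)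
    {r : X → Fin m} {e : Finset X} (hr : ∀ x, (r x : ℕ) < 2 ↔ x ∈ e)
    {W : Finset X} (hW : W.Nonempty) :
    s ((W.image r).min' (hW.image r)) = s ⟨0, by omega⟩ ↔ (e ∩ W).Nonempty := by
  rw [score_eq_top_iff hm hs12 hstrict]
  constructor
  · intro h
    obtain ⟨x, hxW, hx⟩ := mem_image.mp (min'_mem _ (hW.image r))
    exact ⟨x, mem_inter.mpr ⟨(hr x).mp (hx ▸ h), hxW⟩⟩
  · rintro ⟨x, hx⟩
    obtain ⟨hxe, hxW⟩ := mem_inter.mp hx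
    exact lt_of_le_of_lt (min'_le _ _ (mem_image_of_mem r hxW)) ((hr x).mpr hxe)

end Scores

/-- CC reduction: with one voter per edge ranking the two endpoints on top,
and a scoring vector with s₁ = s₂ > s_i (i ≥ 3), H has a vertex cover of
size ≤ k iff some committee W of size ≤ k attains CC score |E| · s₁,
i.e. every voter has one of her top-2 candidates in W. -/
theorem stmt_7 {X : Type*} [DecidableEq X]
    (m k : ℕ) (hm : 2 ≤ m) (hk : 1 ≤ k)
    [Nonempty X]
    (E : Finset (Finset X))
    (pos : Finset X → (X ≃ Fin m))
    (htop : ∀ e ∈ E, ∀ x : X, ((pos e x : Fin m) : ℕ) < 2 ↔ x ∈ e)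
    (s : Fin m → ℝ)
    (hs12 : s ⟨0, by omega⟩ = s ⟨1, by omega⟩)
    (hmono : ∀ i j : Fin m, i ≤ j → s j ≤ s i)
    (hstrict : ∀ i : Fin m, 2 ≤ (i : ℕ) → s i < s ⟨1, by omega⟩) :
    (∃ S : Finset X, S.card ≤ k ∧ ∀ e ∈ E, (e ∩ S).Nonempty) ↔
    (∃ W : Finset X, ∃ hW : W.Nonempty, W.card ≤ k ∧
      (∑ e ∈ E, s ((W.image (pos e)).min' (hW.image _))) =
        (E.card : ℝ) * s ⟨0, by omega⟩) := by
  have score_eq_iff_covers (W : Finset X) (hW : W.Nonempty) :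
      (∑ e ∈ E, s ((W.image (pos e)).min' (hW.image _))) =
          (E.card : ℝ) * s ⟨0, by omega⟩ ↔ ∀ e ∈ E, (e ∩ W).Nonempty := by
    rw [← nsmul_eq_mul, ← sum_const, sum_eq_sum_iff_of_le fun e _ => score_le_top hm hmono _]
    exact forall₂_congr fun e he =>
      utility_eq_top_iff_inter_nonempty hm hs12 hstrict (htop e he) hW
  constructor
  · rintro ⟨S, hS, hcover⟩
    obtain ⟨W, hW, hSW, hWk⟩ := exists_nonempty_superset_card_le hk hS
    exact ⟨W, hW, hWk, (score_eq_iff_covers W hW).mpr fun e he =>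
      (hcover e he).mono (inter_subset_inter_left hSW)⟩
  · rintro ⟨W, hW, hWk, hscore⟩
    exact ⟨W, hWk, (score_eq_iff_covers W hW).mp hscore⟩
end
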